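/- arXiv:2402.05503 — 2 statements merged into one kernel-verified Lean document; each statement's English description precedes it below -/
import Mathlib

section
/- Let x_i > 0 be pairwise distinct, d_i ≥ 0, H_{ij} = d_i d_j/(x_i + x_j), and suppose x_i is strictly increasing. If H defines a bounded operator on ℓ² with norm ‖H‖, then for every n, N(x_n)·M(x_n) ≤ 4‖H‖², where N(x) = ∑_{x_j ≤ x} d_j² and M(x) = ∑_{x_j ≥ x} d_j²/x_j². -/
/-!
Test the kernel `d i * d j / (x i + x j)` against `g = d` on a finite set of indices with
`x i ≤ x n` and `f = d / x` on a finite set with `x n ≤ x j`. Since `x i + x j ≤ 2 * x j` there,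
every term of `⟪T f, g⟫` is at least half the corresponding term of `‖g‖² * ‖f‖²`, while
Cauchy–Schwarz bounds `⟪T f, g⟫` by `‖T‖ * ‖f‖ * ‖g‖`; hence `‖g‖² * ‖f‖² ≤ 4 * ‖T‖²`.
The two series are suprema of their finite partial sums, which gives the claim.
-/

open scoped RealInnerProductSpace ENNReal

theorem sq_mul_sq_le_four_mul_opNorm_sq {E F : Type*} [NormedAddCommGroup E]
    [InnerProductSpace ℝ E] [NormedAddCommGroup F] [InnerProductSpace ℝ F]
    (T : E →L[ℝ] F) {f : E} {g : F} (h : ‖g‖ ^ 2 * ‖f‖ ^ 2 / 2 ≤ ⟪T f, g⟫) :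
    ‖g‖ ^ 2 * ‖f‖ ^ 2 ≤ 4 * ‖T‖ ^ 2 := by
  have hcs : ⟪T f, g⟫ ≤ ‖T‖ * (‖g‖ * ‖f‖) :=
    calc ⟪T f, g⟫ ≤ ‖T f‖ * ‖g‖ := real_inner_le_norm _ _
      _ ≤ ‖T‖ * ‖f‖ * ‖g‖ := by gcongr; exact T.le_opNorm f
      _ = ‖T‖ * (‖g‖ * ‖f‖) := by ring
  have hgf : 0 ≤ ‖g‖ * ‖f‖ := by positivity
  nlinarith [sq_nonneg (‖g‖ * ‖f‖ - 2 * ‖T‖), norm_nonneg T]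

theorem lp.norm_sum_single_sq {ι : Type*} [DecidableEq ι] (s : Finset ι) (v : ι → ℝ) :
    ‖∑ i ∈ s, lp.single 2 i (v i)‖ ^ 2 = ∑ i ∈ s, v i ^ 2 := by
  have h := lp.norm_sum_single (E := fun _ : ι => ℝ) (p := 2) (by norm_num) v s
  simpa only [ENNReal.toReal_ofNat, Real.rpow_two, Real.norm_eq_abs, sq_abs] using h

theorem ENNReal.tsum_mul_tsum_le {ι κ : Type*} {a : ι → ℝ≥0∞} {b : κ → ℝ≥0∞} {c : ℝ≥0∞}
    (h : ∀ s t, (∑ i ∈ s, a i) * (∑ j ∈ t, b j) ≤ c) : (∑' i, a i) * (∑' j, b j) ≤ c := by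
  simp only [ENNReal.tsum_eq_iSup_sum, ENNReal.iSup_mul, ENNReal.mul_iSup]
  exact iSup₂_le fun t s => h s t

theorem half_mul_le_cauchy_kernel {a b s t : ℝ} (hs : 0 < s) (hst : s ≤ t) :
    a ^ 2 * (b ^ 2 / t ^ 2) / 2 ≤ a * b / (s + t) * (b / t) * a := by
  have ht : 0 < t := hs.trans_le hst
  calc a ^ 2 * (b ^ 2 / t ^ 2) / 2 = a ^ 2 * b ^ 2 / (2 * t * t) := by field_simp
    _ ≤ a ^ 2 * b ^ 2 / ((s + t) * t) := by gcongr; linarith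
    _ = a * b / (s + t) * (b / t) * a := by field_simp

section MatrixOperator

variable {ι : Type*} [DecidableEq ι] {H : ι → ι → ℝ}
  {T : lp (fun _ : ι => ℝ) 2 →L[ℝ] lp (fun _ : ι => ℝ) 2}

theorem apply_single_of_matrix
    (hT : ∀ f : lp (fun _ : ι => ℝ) 2, ∀ i,
      (T f : ∀ _ : ι, ℝ) i = ∑' j, H i j * (f : ∀ _ : ι, ℝ) j)
    (i j : ι) (c : ℝ) : (T (lp.single 2 j c) : ∀ _ : ι, ℝ) i = H i j * c := by
  rw [hT, tsum_eq_single j fun k hk => by simp [hk], lp.single_apply_self]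

theorem inner_apply_sum_single_sum_single
    (hT : ∀ f : lp (fun _ : ι => ℝ) 2, ∀ i,
      (T f : ∀ _ : ι, ℝ) i = ∑' j, H i j * (f : ∀ _ : ι, ℝ) j)
    (S F : Finset ι) (u v : ι → ℝ) :
    ⟪T (∑ j ∈ F, lp.single 2 j (v j)), ∑ i ∈ S, lp.single 2 i (u i)⟫ =
      ∑ i ∈ S, ∑ j ∈ F, H i j * v j * u i := by
  rw [map_sum, sum_inner, Finset.sum_comm]
  refine Finset.sum_congr rfl fun j _ => ?_
  rw [inner_sum]
  refine Finset.sum_congr rfl fun i _ => ?_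
  rw [lp.inner_single_right, apply_single_of_matrix hT, RCLike.inner_apply, conj_trivial,
    mul_comm]

theorem sum_sq_mul_sum_sq_div_sq_le_four_mul_opNorm_sq {x d : ι → ℝ} (hx : ∀ i, 0 < x i)
    (hT : ∀ f : lp (fun _ : ι => ℝ) 2, ∀ i,
      (T f : ∀ _ : ι, ℝ) i = ∑' j, d i * d j / (x i + x j) * (f : ∀ _ : ι, ℝ) j)
    {S F : Finset ι} (hSF : ∀ i ∈ S, ∀ j ∈ F, x i ≤ x j) :
    (∑ i ∈ S, d i ^ 2) * (∑ j ∈ F, d j ^ 2 / x j ^ 2) ≤ 4 * ‖T‖ ^ 2 := by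
  set f := ∑ j ∈ F, lp.single 2 j (d j / x j)
  set g := ∑ i ∈ S, lp.single 2 i (d i)
  have hf : ‖f‖ ^ 2 = ∑ j ∈ F, d j ^ 2 / x j ^ 2 := by
    simp only [f, lp.norm_sum_single_sq, div_pow]
  have hg : ‖g‖ ^ 2 = ∑ i ∈ S, d i ^ 2 := lp.norm_sum_single_sq S d
  rw [← hf, ← hg]
  refine sq_mul_sq_le_four_mul_opNorm_sq T ?_
  rw [hf, hg, inner_apply_sum_single_sum_single hT, Finset.sum_mul_sum, Finset.sum_div]
  gcongr with i hi
  rw [Finset.sum_div]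
  gcongr with j hj
  exact half_mul_le_cauchy_kernel (hx i) (hSF i hi j hj)

end MatrixOperator

theorem stmt_6_general (x d : ℕ → ℝ) (hx : ∀ i, 0 < x i)
    (T : lp (fun _ : ℕ => ℝ) 2 →L[ℝ] lp (fun _ : ℕ => ℝ) 2)
    (hT : ∀ f : lp (fun _ : ℕ => ℝ) 2, ∀ i : ℕ,
      (T f : ∀ _ : ℕ, ℝ) i = ∑' j, d i * d j / (x i + x j) * (f : ∀ _ : ℕ, ℝ) j)
    (n : ℕ) :
    (∑' j, if x j ≤ x n then ENNReal.ofReal ((d j) ^ 2) else 0) *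
        (∑' j, if x n ≤ x j then ENNReal.ofReal ((d j) ^ 2 / (x j) ^ 2) else 0)
      ≤ ENNReal.ofReal (4 * ‖T‖ ^ 2) := by
  refine ENNReal.tsum_mul_tsum_le fun S F => ?_
  rw [← Finset.sum_filter, ← Finset.sum_filter,
    ← ENNReal.ofReal_sum_of_nonneg fun _ _ => by positivity,
    ← ENNReal.ofReal_sum_of_nonneg fun _ _ => by positivity,
    ← ENNReal.ofReal_mul (Finset.sum_nonneg fun _ _ => by positivity)]
  exact ENNReal.ofReal_le_ofReal <| sum_sq_mul_sum_sq_div_sq_le_four_mul_opNorm_sq hx hT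
    fun i hi j hj => (Finset.mem_filter.mp hi).2.trans (Finset.mem_filter.mp hj).2

theorem stmt_6 (x d : ℕ → ℝ) (hx : ∀ i, 0 < x i) (hmono : StrictMono x)
    (hd : ∀ i, 0 ≤ d i)
    (T : lp (fun _ : ℕ => ℝ) 2 →L[ℝ] lp (fun _ : ℕ => ℝ) 2)
    (hT : ∀ f : lp (fun _ : ℕ => ℝ) 2, ∀ i : ℕ,
      (T f : ∀ _ : ℕ, ℝ) i = ∑' j, d i * d j / (x i + x j) * (f : ∀ _ : ℕ, ℝ) j)
    (n : ℕ) :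
    (∑' j, if x j ≤ x n then ENNReal.ofReal ((d j) ^ 2) else 0) *
        (∑' j, if x n ≤ x j then ENNReal.ofReal ((d j) ^ 2 / (x j) ^ 2) else 0)
      ≤ ENNReal.ofReal (4 * ‖T‖ ^ 2) :=
  stmt_6_general x d hx T hT n
end

section
/- Let x_i > 0 be strictly increasing and pairwise distinct, d_i > 0, and suppose that for every x > 0 both N(x) = ∑_{x_j ≤ x} d_j² and M(x) = ∑_{x_j ≥ x} d_j²/x_j² are finite. If f ∈ ℓ² satisfies ∑_{i=1}^∞ f_i d_i e^{−x_i s} = 0 for all s > 0 (with absolute convergence for each s > 0), then f = 0. -/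
/-!
If `aᵢ = 0` for `i < n`, then `e^{x_n s} ∑ᵢ e^{-x_i s} aᵢ = a_n + ∑_{i>n} e^{-(x_i - x_n) s} aᵢ`,
and the tail tends to `0` as `s → ∞` by dominated convergence, since absolute convergence at one
abscissa `s₀` dominates it for all `s ≥ s₀`. So a Dirichlet series with strictly increasing
exponents that vanishes for large `s` has all its coefficients zero, by strong induction on `n`.
-/

open Filter Topology Real

section DirichletSeries

variable {E : Type*} [NormedAddCommGroup E] [NormedSpace ℝ E] [CompleteSpace E]
  {a : ℕ → E} {x : ℕ → ℝ} {s₀ : ℝ}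

theorem tendsto_exp_smul_tsum_exp_smul_of_forall_lt_eq_zero (hx : StrictMono x) {n : ℕ}
    (ha : ∀ i < n, a i = 0) (hsum : Summable fun i => exp (-(x i * s₀)) * ‖a i‖) :
    Tendsto (fun s => exp (x n * s) • ∑' i, exp (-(x i * s)) • a i) atTop (𝓝 (a n)) := by
  have hshift (s : ℝ) : exp (x n * s) • ∑' i, exp (-(x i * s)) • a i
      = ∑' i, exp (-((x i - x n) * s)) • a i := by
    rw [← tsum_const_smul'']
    congr 1 with i
    rw [smul_smul, ← exp_add]
    ring_nf
  simp only [hshift]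
  rw [← tsum_ite_eq n a]
  refine tendsto_tsum_of_dominated_convergence (hsum.mul_left (exp (x n * s₀))) (fun i => ?_) ?_
  · rcases lt_trichotomy i n with hin | rfl | hni
    · simp [ha i hin, hin.ne]
    · simp
    · have hgap : Tendsto (fun s => exp (-((x i - x n) * s))) atTop (𝓝 0) :=
        tendsto_exp_atBot.comp <| tendsto_neg_atTop_atBot.comp <|
          tendsto_id.const_mul_atTop (sub_pos.2 (hx hni))
      simpa [hni.ne'] using hgap.smul_const (a i)
  · filter_upwards [eventually_ge_atTop s₀] with s hs i
    rcases lt_or_ge i n with hin | hni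
    · simp only [ha i hin, smul_zero, norm_zero]
      positivity
    · have hgap : 0 ≤ x i - x n := sub_nonneg.2 (hx.monotone hni)
      calc ‖exp (-((x i - x n) * s)) • a i‖ = exp (-((x i - x n) * s)) * ‖a i‖ := by
            rw [norm_smul, norm_of_nonneg (exp_pos _).le]
        _ ≤ exp (-((x i - x n) * s₀)) * ‖a i‖ := by gcongr
        _ = exp (x n * s₀) * (exp (-(x i * s₀)) * ‖a i‖) := by
            rw [← mul_assoc, ← exp_add]
            ring_nf

theorem eq_zero_of_tsum_exp_smul_eventually_eq_zero (hx : StrictMono x)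
    (hsum : Summable fun i => exp (-(x i * s₀)) * ‖a i‖)
    (hzero : ∀ᶠ s in atTop, ∑' i, exp (-(x i * s)) • a i = 0) : a = 0 := by
  funext n
  induction n using Nat.strong_induction_on with
  | _ n ih =>
    refine tendsto_nhds_unique
      (tendsto_exp_smul_tsum_exp_smul_of_forall_lt_eq_zero hx ih hsum) ?_
    refine tendsto_const_nhds.congr' ?_
    filter_upwards [hzero] with s hs
    rw [hs, smul_zero, Pi.zero_apply]

end DirichletSeries

theorem stmt_9_general (x d : ℕ → ℝ) (hmono : StrictMono x)
    (hd : ∀ i, 0 < d i)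
    (f : ℕ → ℝ)
    (habs : ∀ s : ℝ, 0 < s → Summable (fun i => |f i| * d i * Real.exp (-(x i * s))))
    (hzero : ∀ s : ℝ, 0 < s → ∑' i, f i * d i * Real.exp (-(x i * s)) = 0) :
    f = 0 := by
  have hsum : Summable fun i => exp (-(x i * 1)) * ‖f i * d i‖ := by
    refine (habs 1 one_pos).congr fun i => ?_
    rw [norm_mul, norm_of_nonneg (hd i).le, Real.norm_eq_abs]
    ring
  have hzero' : ∀ᶠ s in atTop, ∑' i, exp (-(x i * s)) • (f i * d i) = 0 := by
    filter_upwards [eventually_gt_atTop 0] with s hs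
    simpa only [smul_eq_mul, mul_comm (exp _)] using hzero s hs
  have hfd := eq_zero_of_tsum_exp_smul_eventually_eq_zero hmono hsum hzero'
  funext i
  exact (mul_eq_zero.1 (congrFun hfd i)).resolve_right (hd i).ne'

theorem stmt_9 (x d : ℕ → ℝ) (hx : ∀ i, 0 < x i) (hmono : StrictMono x)
    (hd : ∀ i, 0 < d i)
    (hN : ∀ X : ℝ, 0 < X → Summable (fun j => if x j ≤ X then (d j) ^ 2 else 0))
    (hM : ∀ X : ℝ, 0 < X → Summable (fun j => if X ≤ x j then (d j) ^ 2 / (x j) ^ 2 else 0))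
    (f : ℕ → ℝ) (hf : Memℓp f 2)
    (habs : ∀ s : ℝ, 0 < s → Summable (fun i => |f i| * d i * Real.exp (-(x i * s))))
    (hzero : ∀ s : ℝ, 0 < s → ∑' i, f i * d i * Real.exp (-(x i * s)) = 0) :
    f = 0 :=
  stmt_9_general x d hmono hd f habs hzero
end
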